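/- For v ⊆ {1,…,d}, define the conditional mean μ_v(x) = ∫_{[0,1]^d} f(x_v : y_{-v}) dy (a function of the coordinates of x in v only). Let u ⊆ {1,…,d}, let v, v' ⊆ u^c, and let x, z be independent random vectors, each uniformly distributed on [0,1]^d. Then E[ (f(x) − μ_v(x)) · (f(x_u : z_{-u}) − μ_{v'}(z)) ] = τ̲²_u. -/

import Mathlib

/-! Integrating out `z` first, `f (x_u : z_{-u}) - μ_{v'}(z)` averages to `μ_u(x) - μ`, and
`f - μ_v` has mean zero, so the expectation is `E[(f - μ_v) μ_u]`. The gluing map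
`(x, y) ↦ (x_u : y_{-u})` preserves the product measure; it leaves `μ_u` unchanged and, as
`v ⊆ uᶜ`, makes `μ_v` a function of `y` alone. Hence `E[f μ_u] = E[μ_u²]` and
`E[μ_v μ_u] = μ²` by independence, and the difference is `τ̲²_u`. -/

open MeasureTheory Finset

/-- The uniform (Lebesgue) probability measure on the interval `[0,1]`. -/
noncomputable def unifSeg : Measure ℝ := (volume : Measure ℝ).restrict (Set.Icc 0 1)

/-- The uniform (Lebesgue) product probability measure on the cube `[0,1]^d`. -/
noncomputable def unifCube (d : ℕ) : Measure (Fin d → ℝ) :=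
  Measure.pi fun _ => unifSeg

/-- `glue u x y` is the point whose `j`-th coordinate is `x j` for `j ∈ u`
and `y j` otherwise, i.e. `(x_u : y_{-u})`. -/
def glue {d : ℕ} (u : Finset (Fin d)) (x y : Fin d → ℝ) : Fin d → ℝ :=
  fun j => if j ∈ u then x j else y j

/-- The lower Sobol' index `τ̲²_u` of the set `u`. -/
noncomputable def lowerSobol {d : ℕ} (f : (Fin d → ℝ) → ℝ) (u : Finset (Fin d)) : ℝ :=
  (∫ x, (∫ y, f (glue u x y) ∂(unifCube d)) ^ 2 ∂(unifCube d))
    - (∫ x, f x ∂(unifCube d)) ^ 2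

/-- The variance `σ²` of `f` over the unit cube. -/
noncomputable def sigmaSq {d : ℕ} (f : (Fin d → ℝ) → ℝ) : ℝ :=
  (∫ x, f x ^ 2 ∂(unifCube d)) - (∫ x, f x ∂(unifCube d)) ^ 2

/-- The upper Sobol' index `τ̄²_u = σ² - τ̲²_{uᶜ}` of the set `u`. -/
noncomputable def upperSobol {d : ℕ} (f : (Fin d → ℝ) → ℝ) (u : Finset (Fin d)) : ℝ :=
  sigmaSq f - lowerSobol f uᶜ

/-- The conditional mean `μ_v(x) = E(f(x) ∣ x_v)`, a function of the coordinates of `x`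
in `v` only. -/
noncomputable def condMean {d : ℕ} (f : (Fin d → ℝ) → ℝ) (v : Finset (Fin d))
    (x : Fin d → ℝ) : ℝ :=
  ∫ y, f (glue v x y) ∂(unifCube d)

open ProbabilityTheory

instance : IsProbabilityMeasure unifSeg :=
  ⟨by simp [unifSeg, Real.volume_Icc]⟩

instance (d : ℕ) : IsProbabilityMeasure (unifCube d) := by
  unfold unifCube; infer_instance

theorem measurePreserving_prodMap_fst_snd {α β : Type*} [MeasurableSpace α]
    [MeasurableSpace β] (μ : Measure α) (ν : Measure β) [IsProbabilityMeasure μ]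
    [IsProbabilityMeasure ν] :
    MeasurePreserving (Prod.map (Prod.fst : α × β → α) (Prod.snd : α × β → β))
      ((μ.prod ν).prod (μ.prod ν)) (μ.prod ν) :=
  (measurePreserving_fst (μ := μ) (ν := ν)).prod measurePreserving_snd

theorem sq_integral_le_integral_sq {α : Type*} [MeasurableSpace α] {μ : Measure α}
    [IsProbabilityMeasure μ] {φ : α → ℝ} (hφ : MemLp φ 2 μ) :
    (∫ a, φ a ∂μ) ^ 2 ≤ ∫ a, φ a ^ 2 ∂μ := by
  have h := variance_nonneg φ μ
  rw [variance_eq_sub hφ] at h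
  simpa [sub_nonneg] using h

theorem MemLp.integral_prod_right_of_two {α β : Type*} [MeasurableSpace α] [MeasurableSpace β]
    {μ : Measure α} {ν : Measure β} [SFinite μ] [IsProbabilityMeasure ν] {F : α × β → ℝ}
    (hF : MemLp F 2 (μ.prod ν)) : MemLp (fun x => ∫ y, F (x, y) ∂ν) 2 μ := by
  have hmeas : AEStronglyMeasurable (fun x => ∫ y, F (x, y) ∂ν) μ :=
    hF.1.integral_prod_right'
  rw [memLp_two_iff_integrable_sq hmeas]
  have hF2 : Integrable (fun p => F p ^ 2) (μ.prod ν) := hF.integrable_sq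
  refine hF2.integral_prod_left.mono' (hmeas.pow 2) ?_
  filter_upwards [hF.1.prodMk_left, hF2.prod_right_ae] with x hx hx2
  rw [Real.norm_of_nonneg (sq_nonneg _)]
  exact sq_integral_le_integral_sq ((memLp_two_iff_integrable_sq hx).2 hx2)

theorem measurePreserving_glue {d : ℕ} (μ : Fin d → Measure ℝ)
    [∀ i, IsProbabilityMeasure (μ i)] (u : Finset (Fin d)) :
    MeasurePreserving (fun p : (Fin d → ℝ) × (Fin d → ℝ) => glue u p.1 p.2)
      ((Measure.pi μ).prod (Measure.pi μ)) (Measure.pi μ) := by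
  classical
  have hsplit := measurePreserving_piEquivPiSubtypeProd μ (· ∈ u)
  convert (hsplit.symm _).comp
    ((measurePreserving_prodMap_fst_snd _ _).comp (hsplit.prod hsplit)) using 1
  ext p j
  by_cases h : j ∈ u <;>
    simp [glue, h, MeasurableEquiv.piEquivPiSubtypeProd, Equiv.piEquivPiSubtypeProd]

theorem glue_glue_self {d : ℕ} (u : Finset (Fin d)) (x z y : Fin d → ℝ) :
    glue u (glue u x z) y = glue u x y := by
  ext j; by_cases h : j ∈ u <;> simp [glue, h]

theorem glue_glue_of_subset_compl {d : ℕ} {u v : Finset (Fin d)} (hv : v ⊆ uᶜ)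
    (x z y : Fin d → ℝ) : glue v (glue u x z) y = glue v z y := by
  ext j
  by_cases h : j ∈ v
  · simp [glue, h, Finset.mem_compl.1 (hv h)]
  · simp [glue, h]

theorem condMean_glue_self {d : ℕ} (f : (Fin d → ℝ) → ℝ) (u : Finset (Fin d))
    (x z : Fin d → ℝ) : condMean f u (glue u x z) = condMean f u x := by
  simp only [condMean, glue_glue_self]

theorem condMean_glue_of_subset_compl {d : ℕ} (f : (Fin d → ℝ) → ℝ) {u v : Finset (Fin d)}
    (hv : v ⊆ uᶜ) (x z : Fin d → ℝ) : condMean f v (glue u x z) = condMean f v z := by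
  simp only [condMean, glue_glue_of_subset_compl hv]

section CondMean

variable {d : ℕ} {f : (Fin d → ℝ) → ℝ}

theorem integral_comp_glue {φ : (Fin d → ℝ) → ℝ} (hφ : AEStronglyMeasurable φ (unifCube d))
    (u : Finset (Fin d)) :
    ∫ p, φ (glue u p.1 p.2) ∂((unifCube d).prod (unifCube d)) = ∫ x, φ x ∂(unifCube d) := by
  have hglue : MeasurePreserving _ _ (unifCube d) := measurePreserving_glue _ u
  conv_rhs => rw [← hglue.map_eq]
  exact (integral_map hglue.aemeasurable (by rwa [hglue.map_eq])).symm

theorem memLp_comp_glue (hf : MemLp f 2 (unifCube d)) (u : Finset (Fin d)) :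
    MemLp (fun p : (Fin d → ℝ) × (Fin d → ℝ) => f (glue u p.1 p.2)) 2
      ((unifCube d).prod (unifCube d)) :=
  hf.comp_measurePreserving (measurePreserving_glue _ u)

theorem memLp_condMean (hf : MemLp f 2 (unifCube d)) (u : Finset (Fin d)) :
    MemLp (condMean f u) 2 (unifCube d) :=
  MemLp.integral_prod_right_of_two (memLp_comp_glue hf u)

theorem integral_condMean (hf : MemLp f 2 (unifCube d)) (u : Finset (Fin d)) :
    ∫ x, condMean f u x ∂(unifCube d) = ∫ x, f x ∂(unifCube d) := by
  rw [← integral_comp_glue hf.1 u, integral_prod _ ((memLp_comp_glue hf u).integrable one_le_two)]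
  rfl

theorem integral_sub_condMean (hf : MemLp f 2 (unifCube d)) (u : Finset (Fin d)) :
    ∫ x, (f x - condMean f u x) ∂(unifCube d) = 0 := by
  rw [integral_sub (hf.integrable one_le_two) ((memLp_condMean hf u).integrable one_le_two),
    integral_condMean hf u, sub_self]

theorem integral_mul_condMean_self (hf : MemLp f 2 (unifCube d)) (u : Finset (Fin d)) :
    ∫ x, f x * condMean f u x ∂(unifCube d) = ∫ x, condMean f u x ^ 2 ∂(unifCube d) := by
  have hCu := memLp_condMean hf u
  have hint : Integrable (fun p : (Fin d → ℝ) × (Fin d → ℝ) =>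
      f (glue u p.1 p.2) * condMean f u p.1) ((unifCube d).prod (unifCube d)) :=
    (memLp_comp_glue hf u).integrable_mul (hCu.comp_measurePreserving measurePreserving_fst)
  rw [← integral_comp_glue (φ := fun x => f x * condMean f u x) (hf.1.mul hCu.1) u]
  simp only [condMean_glue_self]
  rw [integral_prod _ hint]
  simp only [integral_mul_const, sq]
  rfl

theorem integral_condMean_mul_condMean_of_subset_compl (hf : MemLp f 2 (unifCube d))
    {u v : Finset (Fin d)} (hv : v ⊆ uᶜ) :
    ∫ x, condMean f u x * condMean f v x ∂(unifCube d) = (∫ x, f x ∂(unifCube d)) ^ 2 := by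
  rw [← integral_comp_glue (φ := fun x => condMean f u x * condMean f v x)
    ((memLp_condMean hf u).1.mul (memLp_condMean hf v).1) u]
  simp only [condMean_glue_self, condMean_glue_of_subset_compl f hv]
  rw [integral_prod_mul (condMean f u) (condMean f v), integral_condMean hf, integral_condMean hf,
    sq]

theorem ae_integral_comp_glue_sub_condMean (hf : MemLp f 2 (unifCube d))
    (u v : Finset (Fin d)) :
    ∀ᵐ x ∂(unifCube d), ∫ z, (f (glue u x z) - condMean f v z) ∂(unifCube d)
      = condMean f u x - ∫ x, f x ∂(unifCube d) := by
  filter_upwards [((memLp_comp_glue hf u).integrable one_le_two).prod_right_ae] with x hx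
  rw [integral_sub hx ((memLp_condMean hf v).integrable one_le_two), integral_condMean hf]
  rfl

theorem integral_sub_condMean_mul_condMean (hf : MemLp f 2 (unifCube d))
    {u v : Finset (Fin d)} (hv : v ⊆ uᶜ) :
    ∫ x, (f x - condMean f v x) * condMean f u x ∂(unifCube d) = lowerSobol f u := by
  have hCu := memLp_condMean hf u
  have hfCu : Integrable (fun x => f x * condMean f u x) (unifCube d) := hf.integrable_mul hCu
  have hCvCu : Integrable (fun x => condMean f v x * condMean f u x) (unifCube d) :=
    (memLp_condMean hf v).integrable_mul hCu
  simp only [sub_mul]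
  rw [integral_sub hfCu hCvCu, integral_mul_condMean_self hf]
  simp only [mul_comm (condMean f v _)]
  rw [integral_condMean_mul_condMean_of_subset_compl hf hv]
  rfl

end CondMean

theorem stmt11_general {d : ℕ} (f : (Fin d → ℝ) → ℝ)
    (hf : MemLp f 2 (unifCube d))
    (u v v' : Finset (Fin d)) (hv : v ⊆ uᶜ) :
    (∫ x, ∫ z, (f x - condMean f v x) * (f (glue u x z) - condMean f v' z)
        ∂(unifCube d) ∂(unifCube d))
      = lowerSobol f u := by
  set M := ∫ x, f x ∂(unifCube d)
  have hdiff : MemLp (fun x => f x - condMean f v x) 2 (unifCube d) :=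
    hf.sub (memLp_condMean hf v)
  have hprod : Integrable (fun x => (f x - condMean f v x) * condMean f u x) (unifCube d) :=
    hdiff.integrable_mul (memLp_condMean hf u)
  calc (∫ x, ∫ z, (f x - condMean f v x) * (f (glue u x z) - condMean f v' z)
          ∂(unifCube d) ∂(unifCube d))
      = ∫ x, (f x - condMean f v x) * condMean f u x - M * (f x - condMean f v x)
          ∂(unifCube d) := by
        refine integral_congr_ae ?_
        filter_upwards [ae_integral_comp_glue_sub_condMean hf u v'] with x hx
        rw [integral_const_mul, hx]
        ring
    _ = lowerSobol f u - M * 0 := by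
        rw [integral_sub hprod ((hdiff.integrable one_le_two).const_mul M), integral_const_mul,
          integral_sub_condMean_mul_condMean hf hv, integral_sub_condMean hf]
    _ = lowerSobol f u := by ring

theorem stmt11 {d : ℕ} (hd : 1 ≤ d) (f : (Fin d → ℝ) → ℝ)
    (hf : MemLp f 2 (unifCube d))
    (u v v' : Finset (Fin d)) (hv : v ⊆ uᶜ) (hv' : v' ⊆ uᶜ) :
    (∫ x, ∫ z, (f x - condMean f v x) * (f (glue u x z) - condMean f v' z)
        ∂(unifCube d) ∂(unifCube d))
      = lowerSobol f u :=
  stmt11_general f hf u v v' hv
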